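/- arXiv:1607.03576 — 8 statements merged into one kernel-verified Lean document; each statement's English description precedes it below -/
import Mathlib

section
/- In a T0 space X, if F is a nonempty irreducible closed set such that the collection {cl{x} : x ∈ F} is a chain under inclusion (i.e., F is down-linear in Irr(X)) and X is a monotone convergence space (d-space), then F is the closure of a unique point of X. -/
def rUB {α : Type*} (r : α → α → Prop) (D : Set α) (a : α) : Prop := ∀ d ∈ D, r d a

def rLUB {α : Type*} (r : α → α → Prop) (D : Set α) (a : α) : Prop :=
  rUB r D a ∧ ∀ b, rUB r D b → r a b

def rDirected {α : Type*} (r : α → α → Prop) (D : Set α) : Prop :=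
  ∀ a ∈ D, ∀ b ∈ D, ∃ c ∈ D, r a c ∧ r b c

/-- The specialization order of a topological space: `x ≤ y` iff `x ∈ cl {y}`. -/
def sle {X : Type*} [TopologicalSpace X] (x y : X) : Prop := x ∈ closure {y}

/-- In a T0 d-space, a nonempty irreducible closed set `F` which is down-linear in
`Irr(X)` (the irreducible closed subsets of `F` form a chain) is the closure of a
unique point. The d-space conditions are: the specialization order is directed
complete, and every directed set converges (as a net) to its supremum. -/
theorem down_linear_irred_closed_is_point_closure {X : Type*} [TopologicalSpace X] [T0Space X]
    (hdc : ∀ D : Set X, D.Nonempty → rDirected sle D → ∃ a, rLUB sle D a)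
    (hconv : ∀ D : Set X, D.Nonempty → rDirected sle D → ∀ a, rLUB sle D a →
      ∀ U : Set X, IsOpen U → a ∈ U → ∃ d ∈ D, ∀ e ∈ D, sle d e → e ∈ U)
    (F : Set X) (hFcl : IsClosed F) (hFirr : IsIrreducible F)
    (hchain : ∀ G H : Set X, IsClosed G → IsIrreducible G → G ⊆ F →
      IsClosed H → IsIrreducible H → H ⊆ F → G ⊆ H ∨ H ⊆ G) :
    ∃! x : X, F = closure {x} := by
  have hsle : ∀ x y : X, sle x y ↔ closure ({x} : Set X) ⊆ closure {y} := by
    intro x y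
    constructor
    · intro h
      exact closure_minimal (Set.singleton_subset_iff.2 h) isClosed_closure
    · intro h
      exact h (subset_closure rfl)
  have hdir : rDirected sle F := by
    intro a ha b hb
    have hca : closure ({a} : Set X) ⊆ F := closure_minimal (Set.singleton_subset_iff.2 ha) hFcl
    have hcb : closure ({b} : Set X) ⊆ F := closure_minimal (Set.singleton_subset_iff.2 hb) hFcl
    rcases hchain (closure {a}) (closure {b}) isClosed_closure
      isIrreducible_singleton.closure hca isClosed_closure
      isIrreducible_singleton.closure hcb with h | h
    · exact ⟨b, hb, (hsle a b).2 h, subset_closure rfl⟩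
    · exact ⟨a, ha, subset_closure rfl, (hsle b a).2 h⟩
  obtain ⟨x, hx⟩ := hdc F hFirr.nonempty hdir
  have hxF : x ∈ F := by
    by_contra hxn
    obtain ⟨d, hd, hdall⟩ := hconv F hFirr.nonempty hdir x hx Fᶜ hFcl.isOpen_compl hxn
    exact hdall d hd (subset_closure rfl) hd
  have hFeq : F = closure {x} := by
    apply Set.Subset.antisymm
    · intro y hy
      exact hx.1 y hy
    · exact closure_minimal (Set.singleton_subset_iff.2 hxF) hFcl
  refine ⟨x, hFeq, ?_⟩
  intro y hy
  have h1 : x ∈ closure ({y} : Set X) := by rw [← hy, hFeq]; exact subset_closure rfl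
  have h2 : y ∈ closure ({x} : Set X) := by rw [← hFeq, hy]; exact subset_closure rfl
  exact ((specializes_iff_mem_closure.2 h1).antisymm (specializes_iff_mem_closure.2 h2)).eq
end

section
/- Let P be a dcpo. For every element x ∈ P, the principal lower set ↓x is a C-compact element of the complete lattice C_σ(P) of Scott closed subsets of P; that is, ↓x ≺ ↓x in C_σ(P). -/
def ScottClosed {α : Type*} [Preorder α] (A : Set α) : Prop :=
  IsLowerSet A ∧ ∀ D ⊆ A, D.Nonempty → DirectedOn (· ≤ ·) D → ∀ a, IsLUB D a → a ∈ A

def DirectedComplete (α : Type*) [Preorder α] : Prop :=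
  ∀ D : Set α, D.Nonempty → DirectedOn (· ≤ ·) D → ∃ a, IsLUB D a

abbrev Cσ (P : Type*) [Preorder P] := {A : Set P // ScottClosed A}

def Beneath {L : Type*} [Preorder L] (a b : L) : Prop :=
  ∀ S : Set L, S.Nonempty → ScottClosed S → ∀ t, IsLUB S t → b ≤ t → a ∈ S

def CCompact {L : Type*} [Preorder L] (a : L) : Prop := Beneath a a

def ScottIrred {α : Type*} [Preorder α] (F : Set α) : Prop :=
  F.Nonempty ∧ ∀ F₁ F₂ : Set α, ScottClosed F₁ → ScottClosed F₂ →
    F ⊆ F₁ ∪ F₂ → F ⊆ F₁ ∨ F ⊆ F₂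

lemma scottClosed_Iic {P : Type*} [Preorder P] (x : P) : ScottClosed (Set.Iic x) :=
  ⟨fun _ _ hba ha => hba.trans ha, fun D hD _ _ a ha => ha.2 fun d hd => hD hd⟩

/-- For every `x` in a dcpo `P`, the principal lower set `↓x` is a C-compact element
of the complete lattice of Scott closed subsets of `P`. -/
theorem Iic_cCompact {P : Type*} [PartialOrder P] (hP : DirectedComplete P) (x : P) :
    CCompact (⟨Set.Iic x, scottClosed_Iic x⟩ : Cσ P) := by
  intro S hSne hSc t htlub hxt
  set f : P → Cσ P := fun p => ⟨Set.Iic p, scottClosed_Iic p⟩ with hf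
  have fmono : ∀ p q : P, p ≤ q → f p ≤ f q := fun p q h =>
    (Set.Iic_subset_Iic.mpr h : Set.Iic p ⊆ Set.Iic q)
  set V : Set P := {p : P | f p ∈ S} with hV
  have hVc : ScottClosed V := by
    constructor
    · intro q p hpq hq
      exact hSc.1 (fmono p q hpq) hq
    · intro D hD hDne hDdir a ha
      have key : IsLUB (f '' D) (f a) := by
        constructor
        · rintro A ⟨d, hd, rfl⟩
          exact fmono d a (ha.1 hd)
        · intro B hB
          have hDB : D ⊆ B.1 := fun d hd => hB ⟨d, hd, rfl⟩ (le_refl d)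
          have haB : a ∈ B.1 := B.2.2 D hDB hDne hDdir a ha
          exact fun y hy => B.2.1 hy haB
      have : f a ∈ S := hSc.2 (f '' D) (fun A ⟨d, hd, he⟩ => he ▸ hD hd)
        (hDne.image f)
        (by
          rintro A ⟨d, hd, rfl⟩ B ⟨e, he, rfl⟩
          obtain ⟨c, hc, hdc, hec⟩ := hDdir d hd e he
          exact ⟨f c, ⟨c, hc, rfl⟩, fmono d c hdc, fmono e c hec⟩)
        (f a) key
      exact this
  have hub : (⟨V, hVc⟩ : Cσ P) ∈ upperBounds S := by
    intro A hA p hp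
    exact hSc.1 (show (f p).1 ⊆ A.1 from fun y hy => A.2.1 hy hp) hA
  have htV : t ≤ ⟨V, hVc⟩ := htlub.2 hub
  exact htV (hxt (le_refl x))
end

section
/- In a complete lattice L, every C-compact element is join-irreducible: if a is C-compact and a ≤ x ∨ y, then a ≤ x or a ≤ y. -/
lemma scottClosed_Iic_union {L : Type*} [CompleteLattice L] (x y : L) :
    ScottClosed (Set.Iic x ∪ Set.Iic y) := by
  constructor
  · intro u v hvu hu
    rcases hu with hu | hu
    · exact Or.inl (hvu.trans hu)
    · exact Or.inr (hvu.trans hu)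
  · intro D hD hne hdir s hs
    -- D ∩ Iic x is cofinal in D, or D ∩ Iic y is
    by_cases hc : ∀ d ∈ D, ∃ e ∈ D, d ≤ e ∧ e ≤ x
    · left
      refine hs.2 fun d hd => ?_
      obtain ⟨e, _, hde, hex⟩ := hc d hd
      exact hde.trans hex
    · push_neg at hc
      obtain ⟨d₁, hd₁, hc⟩ := hc
      right
      refine hs.2 fun d hd => ?_
      obtain ⟨e, he, hd₁e, hde⟩ := hdir d₁ hd₁ d hd
      rcases hD he with hex | hey
      · exact absurd hex (hc e he hd₁e)
      · exact hde.trans hey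

/-- In a complete lattice, every C-compact element is join-irreducible. -/
theorem cCompact_join_irreducible {L : Type*} [CompleteLattice L]
    (a : L) (ha : CCompact a) (x y : L) (h : a ≤ x ⊔ y) : a ≤ x ∨ a ≤ y := by
  have hlub : IsLUB (Set.Iic x ∪ Set.Iic y) (x ⊔ y) := by
    constructor
    · rintro z (hz | hz)
      · exact hz.trans le_sup_left
      · exact hz.trans le_sup_right
    · intro b hb
      exact sup_le (hb (Or.inl le_rfl)) (hb (Or.inr le_rfl))
  have := ha _ ⟨x, Or.inl le_rfl⟩ (scottClosed_Iic_union x y) _ hlub h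
  exact this
end

section
/- Let X = ℕ × (ℕ ∪ {∞}) be the Johnstone poset, ordered by (m,n) ≤ (m',n') iff (m = m' and n ≤ n') or (n' = ∞ and n ≤ m'). Then X is a dcpo. -/
def rScottClosed {α : Type*} (r : α → α → Prop) (A : Set α) : Prop :=
  (∀ x y, r x y → y ∈ A → x ∈ A) ∧
  ∀ D ⊆ A, D.Nonempty → rDirected r D → ∀ a, rLUB r D a → a ∈ A

def rIrred {α : Type*} (r : α → α → Prop) (F : Set α) : Prop :=
  F.Nonempty ∧ ∀ F₁ F₂ : Set α, rScottClosed r F₁ → rScottClosed r F₂ →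
    F ⊆ F₁ ∪ F₂ → F ⊆ F₁ ∨ F ⊆ F₂

/-- The Johnstone order on `ℕ × (ℕ ∪ {∞})`:
`(m, n) ≤ (m', n')` iff `m = m'` and `n ≤ n'`, or `n' = ∞` and `n ≤ m'`. -/
def jle (p q : ℕ × ℕ∞) : Prop :=
  (p.1 = q.1 ∧ p.2 ≤ q.2) ∨ (q.2 = ⊤ ∧ p.2 ≤ (q.1 : ℕ∞))

/-!
A point `(m, ∞)` is maximal, so a directed set containing one has it as its greatest element.
Otherwise any two points of a directed set have a common upper bound with finite second
coordinate, which forces them into a single column `{m} × (ℕ ∪ {∞})`. The order on a column is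
that of `ℕ∞`, and `(m, sup of the second coordinates)` is the least upper bound: an upper bound
`(k, ∞)` in another column dominates every second coordinate by `k`, hence also their supremum.
-/

theorem rLUB_of_mem_of_maximal {α : Type*} {r : α → α → Prop} {D : Set α} {q : α}
    (hD : rDirected r D) (hq : q ∈ D) (hmax : ∀ c, r q c → c = q) : rLUB r D q := by
  refine ⟨fun d hd => ?_, fun b hb => hb q hq⟩
  obtain ⟨c, -, hdc, hqc⟩ := hD d hd q hq
  rwa [← hmax c hqc]

theorem eq_of_jle_of_snd_eq_top {p q : ℕ × ℕ∞} (hp : p.2 = ⊤) (h : jle p q) : q = p := by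
  rcases h with ⟨h1, h2⟩ | ⟨-, h2⟩
  · rw [hp, top_le_iff] at h2
    exact Prod.ext h1.symm (h2.trans hp.symm)
  · rw [hp, top_le_iff] at h2
    exact absurd h2 (ENat.natCast_ne_top _)

theorem fst_eq_of_jle_of_snd_ne_top {p q : ℕ × ℕ∞} (h : jle p q) (hq : q.2 ≠ ⊤) : p.1 = q.1 :=
  (h.resolve_right fun h' => hq h'.1).1

theorem jle_mk_sSup {m : ℕ} {S : Set ℕ∞} (hS : S.Nonempty) {b : ℕ × ℕ∞}
    (h : ∀ n ∈ S, jle (m, n) b) : jle (m, sSup S) b := by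
  by_cases hb : b.2 = ⊤
  · by_cases hm : m = b.1
    · exact Or.inl ⟨hm, hb ▸ le_top⟩
    · exact Or.inr ⟨hb, sSup_le fun n hn => ((h n hn).resolve_left fun h' => hm h'.1).2⟩
  · obtain ⟨n₀, hn₀⟩ := hS
    have hm : m = b.1 := fst_eq_of_jle_of_snd_ne_top (h n₀ hn₀) hb
    exact Or.inl ⟨hm, sSup_le fun n hn => ((h n hn).resolve_right fun h' => hb h'.1).2⟩

theorem rLUB_jle_of_fst_eq {D : Set (ℕ × ℕ∞)} (hD : D.Nonempty) {m : ℕ}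
    (hm : ∀ d ∈ D, d.1 = m) : rLUB jle D (m, sSup (Prod.snd '' D)) := by
  have hcol : ∀ d ∈ D, (m, d.2) = d := fun d hd => Prod.ext (hm d hd).symm rfl
  refine ⟨fun d hd => Or.inl ⟨hm d hd, le_sSup ⟨d, hd, rfl⟩⟩, fun b hb => ?_⟩
  refine jle_mk_sSup (hD.image _) ?_
  rintro _ ⟨d, hd, rfl⟩
  exact (hcol d hd).symm ▸ hb d hd

/-- The Johnstone poset `ℕ × (ℕ ∪ {∞})` is a dcpo: every nonempty directed subset
has a least upper bound. -/
theorem johnstone_directedComplete :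
    ∀ D : Set (ℕ × ℕ∞), D.Nonempty → rDirected jle D → ∃ a, rLUB jle D a := by
  rintro D ⟨p, hp⟩ hdir
  by_cases htop : ∃ q ∈ D, q.2 = ⊤
  · obtain ⟨q, hq, hq2⟩ := htop
    exact ⟨q, rLUB_of_mem_of_maximal hdir hq fun c => eq_of_jle_of_snd_eq_top hq2⟩
  · push Not at htop
    have hcol : ∀ d ∈ D, d.1 = p.1 := by
      intro d hd
      obtain ⟨c, hc, hdc, hpc⟩ := hdir d hd p hp
      rw [fst_eq_of_jle_of_snd_ne_top hdc (htop c hc), fst_eq_of_jle_of_snd_ne_top hpc (htop c hc)]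
    exact ⟨_, rLUB_jle_of_fst_eq ⟨p, hp⟩ hcol⟩
end

section
/- In the Johnstone dcpo X = ℕ × (ℕ ∪ {∞}) with (m,n) ≤ (m',n') iff (m = m' and n ≤ n') or (n' = ∞ and n ≤ m'), the whole set X is an irreducible closed set in the Scott topology, but X is not the Scott closure of any single point; hence the Scott topology on X is not sober. -/
/-- The `k`-th column as a directed set. -/
lemma col_directed (k : ℕ) :
    rDirected jle (Set.range fun n : ℕ => ((k, (n : ℕ∞)) : ℕ × ℕ∞)) := by
  rintro _ ⟨a, rfl⟩ _ ⟨b, rfl⟩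
  refine ⟨(k, ((max a b : ℕ) : ℕ∞)), ⟨max a b, rfl⟩, Or.inl ⟨rfl, ?_⟩, Or.inl ⟨rfl, ?_⟩⟩
  · show ((a : ℕ) : ℕ∞) ≤ ((max a b : ℕ) : ℕ∞)
    exact_mod_cast le_max_left a b
  · show ((b : ℕ) : ℕ∞) ≤ ((max a b : ℕ) : ℕ∞)
    exact_mod_cast le_max_right a b

/-- `(k, ⊤)` is the lub of the `k`-th column. -/
lemma col_lub (k : ℕ) :
    rLUB jle (Set.range fun n : ℕ => ((k, (n : ℕ∞)) : ℕ × ℕ∞)) (k, ⊤) := by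
  constructor
  · rintro _ ⟨a, rfl⟩; exact Or.inl ⟨rfl, le_top⟩
  · rintro ⟨b1, b2⟩ hb
    have hb2 : b2 = ⊤ := by
      by_contra h
      lift b2 to ℕ using h with j
      rcases hb _ ⟨j + 1, rfl⟩ with ⟨_, h2⟩ | ⟨h2, _⟩
      · have h2' : ((j + 1 : ℕ) : ℕ∞) ≤ ((j : ℕ) : ℕ∞) := h2
        exact absurd (Nat.cast_le.mp h2') (by omega)
      · exact absurd h2 (by simp)
    have hb1 : b1 = k := by
      by_contra h
      rcases hb _ ⟨b1 + 1, rfl⟩ with ⟨h1, _⟩ | ⟨_, h2⟩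
      · exact h h1.symm
      · have h2' : ((b1 + 1 : ℕ) : ℕ∞) ≤ ((b1 : ℕ) : ℕ∞) := h2
        exact absurd (Nat.cast_le.mp h2') (by omega)
    exact Or.inl ⟨hb1.symm, hb2 ▸ le_refl _⟩

/-- A Scott-closed set containing infinitely many top points is everything. -/
lemma full_of_inf_tops (F : Set (ℕ × ℕ∞)) (hF : rScottClosed jle F)
    (h : {m : ℕ | ((m, ⊤) : ℕ × ℕ∞) ∈ F}.Infinite) : ∀ p : ℕ × ℕ∞, p ∈ F := by
  obtain ⟨hdown, hlub⟩ := hF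
  have hfin : ∀ k n : ℕ, ((k, (n : ℕ∞)) : ℕ × ℕ∞) ∈ F := by
    intro k n
    have : ∃ m ∈ {m : ℕ | ((m, ⊤) : ℕ × ℕ∞) ∈ F}, n ≤ m := by
      by_contra hc
      push_neg at hc
      exact h (Set.Finite.subset (Set.finite_Iio n) fun m hm => hc m hm)
    obtain ⟨m, hm, hnm⟩ := this
    refine hdown _ (m, ⊤) (Or.inr ⟨rfl, ?_⟩) hm
    show ((n : ℕ) : ℕ∞) ≤ ((m : ℕ) : ℕ∞)
    exact_mod_cast hnm
  rintro ⟨k, n⟩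
  rcases eq_or_ne n ⊤ with rfl | hn
  · exact hlub _ (by rintro _ ⟨a, rfl⟩; exact hfin k a) ⟨_, Set.mem_range_self 0⟩
      (col_directed k) _ (col_lub k)
  · lift n to ℕ using hn
    exact hfin k n

/-- In the Johnstone dcpo, the whole set is an irreducible Scott closed set which is
not the Scott closure `↓x` of any point; hence the Scott topology is not sober. -/
theorem johnstone_not_sober :
    rScottClosed jle (Set.univ : Set (ℕ × ℕ∞)) ∧
    rIrred jle (Set.univ : Set (ℕ × ℕ∞)) ∧
    (¬ ∃ x : ℕ × ℕ∞, (Set.univ : Set (ℕ × ℕ∞)) = {y | jle y x}) ∧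
    ¬ (∀ F : Set (ℕ × ℕ∞), rScottClosed jle F → rIrred jle F →
        ∃ x : ℕ × ℕ∞, F = {y | jle y x}) := by
  have hclosed : rScottClosed jle (Set.univ : Set (ℕ × ℕ∞)) :=
    ⟨fun _ _ _ _ => trivial, fun _ _ _ _ _ _ => trivial⟩
  have hirred : rIrred jle (Set.univ : Set (ℕ × ℕ∞)) := by
    refine ⟨⟨(0, 0), trivial⟩, fun F₁ F₂ h₁ h₂ hsub => ?_⟩
    have hun : {m : ℕ | ((m, ⊤) : ℕ × ℕ∞) ∈ F₁} ∪ {m : ℕ | ((m, ⊤) : ℕ × ℕ∞) ∈ F₂}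
        = Set.univ := by
      ext m; simpa using hsub (trivial : ((m, ⊤) : ℕ × ℕ∞) ∈ Set.univ)
    have : ({m : ℕ | ((m, ⊤) : ℕ × ℕ∞) ∈ F₁} ∪
        {m : ℕ | ((m, ⊤) : ℕ × ℕ∞) ∈ F₂}).Infinite := by
      rw [hun]; exact Set.infinite_univ
    rcases Set.infinite_union.mp this with h | h
    · exact Or.inl fun p _ => full_of_inf_tops F₁ h₁ h p
    · exact Or.inr fun p _ => full_of_inf_tops F₂ h₂ h p
  have hnot : ¬ ∃ x : ℕ × ℕ∞, (Set.univ : Set (ℕ × ℕ∞)) = {y | jle y x} := by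
    rintro ⟨⟨m, n⟩, hx⟩
    rcases eq_or_ne n ⊤ with rfl | hn
    · have : ((m + 1, ⊤) : ℕ × ℕ∞) ∈ {y | jle y (m, ⊤)} := hx ▸ trivial
      rcases this with ⟨h1, _⟩ | ⟨_, h2⟩
      · omega
      · exact absurd h2 (by simp)
    · have : ((m, ⊤) : ℕ × ℕ∞) ∈ {y | jle y (m, n)} := hx ▸ trivial
      rcases this with ⟨_, h2⟩ | ⟨h2, _⟩
      · exact hn (top_le_iff.mp h2)
      · exact hn h2
  exact ⟨hclosed, hirred, hnot, fun h => hnot (h _ hclosed hirred)⟩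
end

section
/- In the Johnstone dcpo X = ℕ × (ℕ ∪ {∞}), every irreducible Scott closed proper subset F of X equals ↓(m,n) for some (m,n) ∈ X; in particular every bounded nonempty irreducible Scott closed set is the closure of a point, so X is bounded sober. -/
lemma jle_refl (p : ℕ × ℕ∞) : jle p p := Or.inl ⟨rfl, le_rfl⟩

lemma jle_trans {x y z : ℕ × ℕ∞} (h1 : jle x y) (h2 : jle y z) : jle x z := by
  rcases h1 with ⟨e1, l1⟩ | ⟨t1, l1⟩
  · rcases h2 with ⟨e2, l2⟩ | ⟨t2, l2⟩
    · exact Or.inl ⟨e1.trans e2, l1.trans l2⟩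
    · exact Or.inr ⟨t2, l1.trans l2⟩
  · rcases h2 with ⟨e2, l2⟩ | ⟨t2, l2⟩
    · refine Or.inr ⟨top_le_iff.mp (t1 ▸ l2), e2 ▸ l1⟩
    · rw [t1] at l2; simp at l2

lemma jle_top_max {m : ℕ} {c : ℕ × ℕ∞} (h : jle ((m, ⊤) : ℕ × ℕ∞) c) : c = (m, ⊤) := by
  obtain ⟨c1, c2⟩ := c
  rcases h with ⟨e, l⟩ | ⟨t, l⟩
  · simp only at e l
    have : c2 = ⊤ := top_le_iff.mp l
    simp [← e, this]
  · simp at l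

lemma lub_of_unbounded (m : ℕ) (S : Set ℕ) (hS : ∀ j : ℕ, ∃ n, j ≤ n ∧ n ∈ S) :
    rDirected jle ((fun n : ℕ => ((m, (n : ℕ∞)) : ℕ × ℕ∞)) '' S) ∧
    rLUB jle ((fun n : ℕ => ((m, (n : ℕ∞)) : ℕ × ℕ∞)) '' S) (m, ⊤) := by
  refine ⟨?_, ?_, ?_⟩
  · rintro a ⟨n1, h1, rfl⟩ b ⟨n2, h2, rfl⟩
    rcases le_total n1 n2 with h | h
    · exact ⟨_, ⟨n2, h2, rfl⟩, Or.inl ⟨rfl, Nat.cast_le.mpr h⟩, jle_refl _⟩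
    · exact ⟨_, ⟨n1, h1, rfl⟩, jle_refl _, Or.inl ⟨rfl, Nat.cast_le.mpr h⟩⟩
  · rintro d ⟨n, hn, rfl⟩
    exact Or.inl ⟨rfl, le_top⟩
  · rintro ⟨b1, b2⟩ hb
    have hb2 : b2 = ⊤ := by
      by_contra hne
      lift b2 to ℕ using hne with t
      obtain ⟨n, hn, hnS⟩ := hS (max b1 t + 1)
      rcases hb _ ⟨n, hnS, rfl⟩ with ⟨e, l⟩ | ⟨tt, l⟩
      · simp only at e l
        have : n ≤ t := by exact_mod_cast l
        omega
      · simp at tt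
    subst hb2
    obtain ⟨n, hn, hnS⟩ := hS (b1 + 1)
    rcases hb _ ⟨n, hnS, rfl⟩ with ⟨e, l⟩ | ⟨tt, l⟩
    · exact Or.inl ⟨e, le_rfl⟩
    · simp only at l
      have : n ≤ b1 := by exact_mod_cast l
      omega

lemma lub_cases {D : Set (ℕ × ℕ∞)} {a : ℕ × ℕ∞} (hne : D.Nonempty)
    (hdir : rDirected jle D) (hlub : rLUB jle D a) :
    (∃ d ∈ D, jle a d) ∨
    (a.2 = ⊤ ∧ ∀ j : ℕ, ∃ n : ℕ, j ≤ n ∧ ((a.1, (n : ℕ∞)) : ℕ × ℕ∞) ∈ D) := by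
  by_cases hmax : ∃ d ∈ D, ∀ e ∈ D, jle e d
  · obtain ⟨d, hd, hub⟩ := hmax
    exact Or.inl ⟨d, hd, hlub.2 d hub⟩
  push_neg at hmax
  have hnotop : ∀ m : ℕ, ((m, ⊤) : ℕ × ℕ∞) ∉ D := by
    intro m hm
    obtain ⟨e, he, hne'⟩ := hmax (m, ⊤) hm
    apply hne'
    obtain ⟨c, hc, hec, htc⟩ := hdir e he (m, ⊤) hm
    rwa [jle_top_max htc] at hec
  obtain ⟨d₀, hd₀⟩ := hne
  obtain ⟨m₀, n₀'⟩ := d₀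
  have hn₀ : n₀' ≠ ⊤ := fun h => hnotop m₀ (h ▸ hd₀)
  lift n₀' to ℕ using hn₀ with n₀
  have hfin : ∀ e ∈ D, e.2 ≠ ⊤ := by
    rintro ⟨e1, e2⟩ he h
    exact hnotop e1 (h ▸ he)
  have hcol : ∀ e ∈ D, e.1 = m₀ := by
    intro e he
    obtain ⟨c, hc, hec, hdc⟩ := hdir e he _ hd₀
    have hc2 : c.2 ≠ ⊤ := hfin c hc
    rcases hec with ⟨e1, _⟩ | ⟨t, _⟩
    · rcases hdc with ⟨e2, _⟩ | ⟨t2, _⟩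
      · simp only at e2
        rw [e1, ← e2]
      · exact absurd t2 hc2
    · exact absurd t hc2
  set S : Set ℕ := {n : ℕ | ((m₀, (n : ℕ∞)) : ℕ × ℕ∞) ∈ D} with hSdef
  have hmem : ∀ e ∈ D, ∃ n ∈ S, e = (m₀, (n : ℕ∞)) := by
    rintro ⟨e1, e2⟩ he
    have h1 : e1 = m₀ := hcol _ he
    have h2 : e2 ≠ ⊤ := hfin _ he
    lift e2 to ℕ using h2 with n
    subst h1
    exact ⟨n, he, rfl⟩
  have hSunb : ∀ j : ℕ, ∃ n, j ≤ n ∧ n ∈ S := by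
    by_contra h
    push_neg at h
    obtain ⟨j, hj⟩ := h
    have hbdd : BddAbove S := ⟨j, fun n hn => by by_contra hc; exact hj n (by omega) hn⟩
    have hSne : S.Nonempty := ⟨n₀, hd₀⟩
    obtain ⟨N, hNS, hNmax⟩ : ∃ N ∈ S, ∀ n ∈ S, n ≤ N :=
      ⟨sSup S, Nat.sSup_mem hSne hbdd, fun n hn => le_csSup hbdd hn⟩
    obtain ⟨e, he, hne'⟩ := hmax (m₀, (N : ℕ∞)) hNS
    apply hne'
    obtain ⟨n, hn, rfl⟩ := hmem e he
    exact Or.inl ⟨rfl, Nat.cast_le.mpr (hNmax n hn)⟩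
  right
  obtain ⟨a1, a2⟩ := a
  have hub : rUB jle D (a1, a2) := hlub.1
  have ha2 : a2 = ⊤ := by
    by_contra hne2
    lift a2 to ℕ using hne2 with t
    obtain ⟨n, hn, hnS⟩ := hSunb (max a1 t + 1)
    rcases hub _ hnS with ⟨e, l⟩ | ⟨tt, l⟩
    · simp only at e l
      have : n ≤ t := by exact_mod_cast l
      omega
    · simp at tt
  subst ha2
  have ha1 : a1 = m₀ := by
    obtain ⟨n, hn, hnS⟩ := hSunb (a1 + 1)
    rcases hub _ hnS with ⟨e, l⟩ | ⟨tt, l⟩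
    · simp only at e; omega
    · simp only at l
      have : n ≤ a1 := by exact_mod_cast l
      omega
  subst ha1
  exact ⟨rfl, hSunb⟩

lemma scottClosed_below (p : ℕ × ℕ∞) : rScottClosed jle {y | jle y p} := by
  constructor
  · intro x y hxy hy
    exact jle_trans hxy hy
  · intro D hD hne hdir a hlub
    rcases lub_cases hne hdir hlub with ⟨d, hd, had⟩ | ⟨h2, hub⟩
    · exact jle_trans had (hD hd)
    · obtain ⟨p1, p2⟩ := p
      obtain ⟨a1, a2⟩ := a
      simp only at h2 hub
      subst h2
      have hp2 : p2 = ⊤ := by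
        by_contra h
        lift p2 to ℕ using h with t
        obtain ⟨n, hn, hnD⟩ := hub (max p1 t + 1)
        rcases hD hnD with ⟨e, l⟩ | ⟨tt, l⟩
        · simp only at e l
          have : n ≤ t := by exact_mod_cast l
          omega
        · simp at tt
      subst hp2
      obtain ⟨n, hn, hnD⟩ := hub (p1 + 1)
      rcases hD hnD with ⟨e, l⟩ | ⟨tt, l⟩
      · exact Or.inl ⟨e, le_top⟩
      · simp only at l
        have : n ≤ p1 := by exact_mod_cast l
        omega

lemma scottClosed_ne_col {F : Set (ℕ × ℕ∞)} (hF : rScottClosed jle F)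
    (hT : ∀ k : ℕ, ((k, ⊤) : ℕ × ℕ∞) ∉ F) (m : ℕ) :
    rScottClosed jle {x | x ∈ F ∧ x.1 ≠ m} := by
  have htop : ∀ y ∈ F, y.2 ≠ (⊤ : ℕ∞) := by
    rintro ⟨y1, y2⟩ hy h
    exact hT y1 (h ▸ hy)
  constructor
  · rintro x y hxy ⟨hyF, hy1⟩
    refine ⟨hF.1 x y hxy hyF, ?_⟩
    rcases hxy with ⟨e, _⟩ | ⟨t, _⟩
    · rw [e]; exact hy1
    · exact absurd t (htop y hyF)
  · intro D hD hne hdir a hlub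
    have hDF : D ⊆ F := fun d hd => (hD hd).1
    have haF : a ∈ F := hF.2 D hDF hne hdir a hlub
    rcases lub_cases hne hdir hlub with ⟨d, hd, had⟩ | ⟨h2, _⟩
    · refine ⟨haF, ?_⟩
      rcases had with ⟨e, _⟩ | ⟨t, _⟩
      · rw [e]; exact (hD hd).2
      · exact absurd t (htop d (hDF hd))
    · exact absurd h2 (htop a haF)

lemma scottClosed_F2 {F : Set (ℕ × ℕ∞)} (hF : rScottClosed jle F) (M : ℕ)
    (hM : ∀ k : ℕ, ((k, ⊤) : ℕ × ℕ∞) ∈ F → k ≤ M) :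
    rScottClosed jle {x | x ∈ F ∧ (x.1 ≠ M ∨ x.2 ≤ (M : ℕ∞))} := by
  have hlow : ∀ x y : ℕ × ℕ∞, jle x y → y ∈ {x | x ∈ F ∧ (x.1 ≠ M ∨ x.2 ≤ (M : ℕ∞))} →
      x ∈ {x | x ∈ F ∧ (x.1 ≠ M ∨ x.2 ≤ (M : ℕ∞))} := by
    rintro x y hxy ⟨hyF, hy⟩
    refine ⟨hF.1 x y hxy hyF, ?_⟩
    rcases hy with hy1 | hy2
    · rcases hxy with ⟨e, _⟩ | ⟨t, l⟩
      · exact Or.inl (e ▸ hy1)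
      · right
        have hyM : y.1 ≤ M := by
          apply hM y.1
          have : ((y.1, y.2) : ℕ × ℕ∞) = y := rfl
          rw [← this, t] at hyF
          exact t ▸ hyF
        exact l.trans (Nat.cast_le.mpr hyM)
    · rcases hxy with ⟨e, l⟩ | ⟨t, l⟩
      · exact Or.inr (l.trans hy2)
      · rw [t] at hy2; simp at hy2
  constructor
  · exact hlow
  · intro D hD hne hdir a hlub
    have hDF : D ⊆ F := fun d hd => (hD hd).1
    have haF : a ∈ F := hF.2 D hDF hne hdir a hlub
    rcases lub_cases hne hdir hlub with ⟨d, hd, had⟩ | ⟨h2, hub⟩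
    · exact hlow a d had (hD hd)
    · refine ⟨haF, Or.inl ?_⟩
      intro haM
      obtain ⟨a1, a2⟩ := a
      simp only at h2 haM hub
      subst h2
      obtain ⟨n, hn, hnD⟩ := hub (M + 1)
      rcases (hD hnD).2 with h | h
      · exact h haM
      · simp only at h
        have : n ≤ M := by exact_mod_cast h
        omega

lemma johnstone_proper {F : Set (ℕ × ℕ∞)} (hF : rScottClosed jle F)
    (hirr : rIrred jle F) (hproper : F ≠ Set.univ) :
    ∃ p : ℕ × ℕ∞, F = {y | jle y p} := by
  by_cases hub : ∀ j : ℕ, ∃ m, j ≤ m ∧ ((m, ⊤) : ℕ × ℕ∞) ∈ F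
  · -- T unbounded: F = univ, contradiction
    exfalso
    apply hproper
    have hfin : ∀ k j : ℕ, ((k, (j : ℕ∞)) : ℕ × ℕ∞) ∈ F := by
      intro k j
      obtain ⟨m, hjm, hm⟩ := hub j
      exact hF.1 _ _ (Or.inr ⟨rfl, Nat.cast_le.mpr hjm⟩) hm
    ext ⟨k, n⟩
    simp only [Set.mem_univ, iff_true]
    induction n using ENat.recTopCoe with
    | top =>
      obtain ⟨hdir, hlub⟩ := lub_of_unbounded k Set.univ (fun j => ⟨j, le_rfl, trivial⟩)
      exact hF.2 ((fun n : ℕ => ((k, (n : ℕ∞)) : ℕ × ℕ∞)) '' Set.univ)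
        (by rintro _ ⟨n, _, rfl⟩; exact hfin k n)
        ⟨_, ⟨0, trivial, rfl⟩⟩ hdir (k, ⊤) hlub
    | coe j => exact hfin k j
  push_neg at hub
  obtain ⟨j₀, hj₀⟩ := hub
  by_cases hT : ∃ m : ℕ, ((m, ⊤) : ℕ × ℕ∞) ∈ F
  · -- T nonempty and bounded: F = ↓(max T, ⊤)
    set S : Set ℕ := {k | ((k, ⊤) : ℕ × ℕ∞) ∈ F} with hSdef
    have hbdd : BddAbove S := ⟨j₀, fun k hk => by
      by_contra hc
      exact hj₀ k (by omega) hk⟩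
    have hSne : S.Nonempty := hT
    set M := sSup S with hMdef
    have hMS : M ∈ S := Nat.sSup_mem hSne hbdd
    have hMmax : ∀ k : ℕ, ((k, ⊤) : ℕ × ℕ∞) ∈ F → k ≤ M := fun k hk => le_csSup hbdd hk
    refine ⟨(M, ⊤), ?_⟩
    have hcover : F ⊆ {y | jle y ((M, ⊤) : ℕ × ℕ∞)} ∪
        {x | x ∈ F ∧ (x.1 ≠ M ∨ x.2 ≤ (M : ℕ∞))} := by
      intro x hx
      by_cases h : x.1 = M
      · exact Or.inl (Or.inl ⟨h, le_top⟩)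
      · exact Or.inr ⟨hx, Or.inl h⟩
    rcases hirr.2 _ _ (scottClosed_below (M, ⊤)) (scottClosed_F2 hF M hMmax) hcover with h | h
    · apply Set.Subset.antisymm h
      intro y hy
      exact hF.1 y (M, ⊤) hy hMS
    · exfalso
      rcases (h hMS).2 with h' | h'
      · exact h' rfl
      · simp at h'
  · -- T empty: F is a bounded column segment
    push_neg at hT
    obtain ⟨x₀, hx₀⟩ := hirr.1
    obtain ⟨m, n₀'⟩ := x₀
    have hn₀ : n₀' ≠ ⊤ := fun h => hT m (h ▸ hx₀)
    lift n₀' to ℕ using hn₀ with n₀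
    have hcol : ∀ x ∈ F, x.1 = m := by
      intro x hx
      by_contra hne
      rcases hirr.2 {y | y ∈ F ∧ y.1 ≠ x.1} {y | y ∈ F ∧ y.1 ≠ m}
          (scottClosed_ne_col hF hT x.1) (scottClosed_ne_col hF hT m)
          (fun y hy => by
            by_cases h : y.1 = m
            · exact Or.inl ⟨hy, fun he => hne (by rw [← he, h])⟩
            · exact Or.inr ⟨hy, h⟩) with h | h
      · exact (h hx).2 rfl
      · exact (h hx₀).2 rfl
    set S : Set ℕ := {n : ℕ | ((m, (n : ℕ∞)) : ℕ × ℕ∞) ∈ F} with hSdef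
    have hSbdd : ∃ N : ℕ, ∀ n ∈ S, n ≤ N := by
      by_contra h
      push_neg at h
      have hSunb : ∀ j : ℕ, ∃ n, j ≤ n ∧ n ∈ S := by
        intro j
        obtain ⟨n, hnS, hjn⟩ := h j
        exact ⟨n, by omega, hnS⟩
      obtain ⟨hdir, hlub⟩ := lub_of_unbounded m S hSunb
      have : ((m, ⊤) : ℕ × ℕ∞) ∈ F := by
        apply hF.2 _ (by rintro _ ⟨n, hn, rfl⟩; exact hn) ?_ hdir (m, ⊤) hlub
        obtain ⟨n, _, hn⟩ := hSunb 0
        exact ⟨_, ⟨n, hn, rfl⟩⟩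
      exact hT m this
    obtain ⟨N, hN⟩ := hSbdd
    have hbdd : BddAbove S := ⟨N, fun n hn => hN n hn⟩
    have hSne : S.Nonempty := ⟨n₀, hx₀⟩
    set h₀ := sSup S with hhdef
    have hhS : h₀ ∈ S := Nat.sSup_mem hSne hbdd
    have hhmax : ∀ n ∈ S, n ≤ h₀ := fun n hn => le_csSup hbdd hn
    refine ⟨(m, (h₀ : ℕ∞)), ?_⟩
    ext ⟨k, n⟩
    constructor
    · intro hx
      have hk : k = m := hcol _ hx
      have hnt : n ≠ ⊤ := fun h => hT k (h ▸ hx)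
      lift n to ℕ using hnt with n'
      subst hk
      exact Or.inl ⟨rfl, Nat.cast_le.mpr (hhmax n' hx)⟩
    · intro hy
      exact hF.1 _ _ hy hhS

/-- In the Johnstone dcpo, every irreducible Scott closed proper subset is a
principal lower set `↓(m, n)`; in particular every upper bounded nonempty
irreducible Scott closed set is the closure of a point, so the Johnstone dcpo is
bounded sober. -/
theorem johnstone_bounded_sober :
    (∀ F : Set (ℕ × ℕ∞), rScottClosed jle F → rIrred jle F → F ≠ Set.univ →
      ∃ p : ℕ × ℕ∞, F = {y | jle y p}) ∧
    (∀ F : Set (ℕ × ℕ∞), rScottClosed jle F → rIrred jle F →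
      (∃ b : ℕ × ℕ∞, ∀ y ∈ F, jle y b) → ∃ p : ℕ × ℕ∞, F = {y | jle y p}) := by
  constructor
  · exact fun F hF hirr hproper => johnstone_proper hF hirr hproper
  · intro F hF hirr ⟨b, hb⟩
    apply johnstone_proper hF hirr
    intro huniv
    subst huniv
    rcases hb (b.1 + 1, ⊤) trivial with ⟨e, _⟩ | ⟨_, l⟩
    · simp at e
    · simp at l
end

section
/- In the Johnstone dcpo X = ℕ × (ℕ ∪ {∞}), for m ∈ ℕ and n ∈ ℕ (n ≠ ∞), the principal lower set ↓(m,n) is a chain; and for any m ∈ ℕ, ↓(m,∞) is the supremum in the lattice of Scott closed sets of the chain of Scott closed sets {↓(m,k) : k ∈ ℕ}. -/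
/-!
Below a point `(m, n)` with `n` finite lie exactly the points `(m, j)` with `j ≤ n`, a chain.
The column `{(m, j) : j ∈ ℕ}` is directed with supremum `(m, ∞)`, its only upper bound; so a
Scott closed set containing every `↓(m, k)` contains `(m, ∞)` and hence `↓(m, ∞)`.
-/

section ScottClosed

variable {α : Type*} {r : α → α → Prop}

theorem rScottClosed_setOf_rel (htrans : ∀ x y z, r x y → r y z → r x z) (a : α) :
    rScottClosed r {y | r y a} :=
  ⟨fun x y hxy hya => htrans x y a hxy hya, fun _ hD _ _ _ hlub => hlub.2 a hD⟩

theorem rScottClosed.setOf_rel_subset {A D : Set α} {a : α} (hA : rScottClosed r A)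
    (hDA : D ⊆ A) (hne : D.Nonempty) (hdir : rDirected r D) (hlub : rLUB r D a) :
    {y | r y a} ⊆ A :=
  fun y hy => hA.1 y a hy (hA.2 D hDA hne hdir a hlub)

end ScottClosed

theorem jle_trans_s15 (p q s : ℕ × ℕ∞) (hpq : jle p q) (hqs : jle q s) : jle p s := by
  rcases hpq with ⟨e1, l1⟩ | ⟨t1, l1⟩ <;> rcases hqs with ⟨e2, l2⟩ | ⟨t2, l2⟩
  · exact Or.inl ⟨e1.trans e2, l1.trans l2⟩
  · exact Or.inr ⟨t2, l1.trans l2⟩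
  · exact Or.inr ⟨top_le_iff.mp (t1 ▸ l2), e2 ▸ l1⟩
  · exact absurd (t1 ▸ l2) (by simp)

theorem jle_coe_iff {y : ℕ × ℕ∞} {m n : ℕ} : jle y (m, n) ↔ y.1 = m ∧ y.2 ≤ n := by
  simp [jle]

theorem jle_total_of_le_coe {a b : ℕ × ℕ∞} {m n : ℕ} (ha : jle a (m, n)) (hb : jle b (m, n)) :
    jle a b ∨ jle b a := by
  rw [jle_coe_iff] at ha hb
  rcases le_total a.2 b.2 with h | h
  · exact Or.inl (Or.inl ⟨ha.1.trans hb.1.symm, h⟩)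
  · exact Or.inr (Or.inl ⟨hb.1.trans ha.1.symm, h⟩)

def jColumn (m : ℕ) : Set (ℕ × ℕ∞) := Set.range fun j : ℕ => (m, (j : ℕ∞))

theorem jColumn_directed (m : ℕ) : rDirected jle (jColumn m) := by
  rintro _ ⟨i, rfl⟩ _ ⟨j, rfl⟩
  exact ⟨(m, (max i j : ℕ)), ⟨max i j, rfl⟩,
    Or.inl ⟨rfl, Nat.cast_le.mpr (le_max_left i j)⟩,
    Or.inl ⟨rfl, Nat.cast_le.mpr (le_max_right i j)⟩⟩

theorem eq_of_rUB_jColumn {m : ℕ} {b : ℕ × ℕ∞} (hb : rUB jle (jColumn m) b) : b = (m, ⊤) := by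
  -- `(m, j)` with `j` beyond both coordinates of `b` can only lie below `b` if `b = (m, ∞)`.
  set j := max b.1 b.2.toNat + 1
  rcases hb (m, (j : ℕ∞)) ⟨j, rfl⟩ with ⟨hm, hj⟩ | ⟨-, hj⟩
  · have htop : b.2 = ⊤ := by
      by_contra hne
      rw [← ENat.natCast_toNat hne, Nat.cast_le] at hj
      omega
    exact Prod.ext hm.symm htop
  · rw [Nat.cast_le] at hj
    omega

theorem rLUB_jColumn (m : ℕ) : rLUB jle (jColumn m) (m, ⊤) := by
  refine ⟨?_, fun b hb => ?_⟩
  · rintro _ ⟨j, rfl⟩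
    exact Or.inl ⟨rfl, le_top⟩
  · rw [eq_of_rUB_jColumn hb]
    exact Or.inl ⟨rfl, le_rfl⟩

/-- In the Johnstone dcpo, for `n ≠ ∞` the principal lower set `↓(m, n)` is a
chain; and `↓(m, ∞)` is the supremum in the lattice of Scott closed sets of the
chain `{↓(m, k) : k ∈ ℕ}`. -/
theorem johnstone_down_sets :
    (∀ m n : ℕ, ∀ a ∈ {y | jle y (m, (n : ℕ∞))}, ∀ b ∈ {y | jle y (m, (n : ℕ∞))},
      jle a b ∨ jle b a) ∧
    (∀ m : ℕ,
      rScottClosed jle {y | jle y (m, (⊤ : ℕ∞))} ∧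
      (∀ k : ℕ, rScottClosed jle {y | jle y (m, (k : ℕ∞))}) ∧
      (∀ k : ℕ, {y | jle y (m, (k : ℕ∞))} ⊆ {y | jle y (m, (⊤ : ℕ∞))}) ∧
      (∀ A : Set (ℕ × ℕ∞), rScottClosed jle A →
        (∀ k : ℕ, {y | jle y (m, (k : ℕ∞))} ⊆ A) →
        {y | jle y (m, (⊤ : ℕ∞))} ⊆ A)) := by
  refine ⟨fun m n a ha b hb => jle_total_of_le_coe ha hb, fun m => ⟨?_, ?_, ?_, ?_⟩⟩
  · exact rScottClosed_setOf_rel jle_trans_s15 _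
  · exact fun k => rScottClosed_setOf_rel jle_trans_s15 _
  · exact fun k y hy => jle_trans_s15 _ _ _ hy (Or.inl ⟨rfl, le_top⟩)
  · intro A hA hk
    have hcol : jColumn m ⊆ A := by
      rintro _ ⟨j, rfl⟩
      exact hk j (Or.inl ⟨rfl, le_rfl⟩)
    exact hA.setOf_rel_subset hcol ⟨_, 0, rfl⟩ (jColumn_directed m) (rLUB_jColumn m)
end

section
/- Let P be a dcpo whose Scott space is sober, and let Q be a dcpo whose Scott space is bounded sober. If the lattices of Scott closed subsets C_σ(P) and C_σ(Q) are order isomorphic, then P and Q are order isomorphic. -/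
open Set

section Basic
variable {α : Type*} [PartialOrder α]

lemma scottClosed_empty : ScottClosed (∅ : Set α) :=
  ⟨fun _ _ _ h => h, fun D hD hne _ _ _ => absurd (hD hne.some_mem) (fun h => h)⟩

lemma scottClosed_univ : ScottClosed (univ : Set α) :=
  ⟨fun _ _ _ _ => trivial, fun _ _ _ _ _ _ => trivial⟩

lemma scottClosed_Iic_s16 (x : α) : ScottClosed (Set.Iic x) :=
  ⟨fun _ _ hle ha => le_trans hle ha,
   fun D hD _ _ a ha => ha.2 (fun d hd => hD hd)⟩

lemma Cσ.le_def {A B : Cσ α} : A ≤ B ↔ A.val ⊆ B.val := Iff.rfl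

def pcl (x : α) : Cσ α := ⟨Set.Iic x, scottClosed_Iic_s16 x⟩

lemma pcl_le_pcl {x y : α} : pcl x ≤ pcl y ↔ x ≤ y :=
  ⟨fun h => h (le_refl x), fun h _ ha => le_trans ha h⟩

lemma pcl_injective : Function.Injective (pcl (α := α)) := fun x y h =>
  Set.Iic_injective (congrArg Subtype.val h)

lemma directedOn_cofinal_cases {D F1 F2 : Set α} (hdir : DirectedOn (· ≤ ·) D)
    (hcov : D ⊆ F1 ∪ F2) :
    (∀ b ∈ D, ∃ c ∈ D ∩ F1, b ≤ c) ∨ (∀ b ∈ D, ∃ c ∈ D ∩ F2, b ≤ c) := by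
  by_cases h : ∀ b ∈ D, ∃ c ∈ D ∩ F1, b ≤ c
  · exact Or.inl h
  · right
    push_neg at h
    obtain ⟨b0, hb0, hnone⟩ := h
    intro b hb
    obtain ⟨c, hc, hbc, hb0c⟩ := hdir b hb b0 hb0
    rcases hcov hc with h1 | h2
    · exact absurd hb0c (hnone c ⟨hc, h1⟩)
    · exact ⟨c, ⟨hc, h2⟩, hbc⟩

lemma isLUB_of_cofinal {D D' : Set α} {a : α} (hsub : D' ⊆ D)
    (hcof : ∀ b ∈ D, ∃ c ∈ D', b ≤ c) (hne : D.Nonempty)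
    (hdir : DirectedOn (· ≤ ·) D) (ha : IsLUB D a) :
    D'.Nonempty ∧ DirectedOn (· ≤ ·) D' ∧ IsLUB D' a := by
  obtain ⟨b, hb⟩ := hne
  obtain ⟨c, hc, _⟩ := hcof b hb
  refine ⟨⟨c, hc⟩, ?_, ?_, ?_⟩
  · intro x hx y hy
    obtain ⟨z, hz, hxz, hyz⟩ := hdir x (hsub hx) y (hsub hy)
    obtain ⟨w, hw, hzw⟩ := hcof z hz
    exact ⟨w, hw, hxz.trans hzw, hyz.trans hzw⟩
  · exact fun x hx => ha.1 (hsub hx)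
  · exact fun z hz => ha.2 (fun x hx => (hcof x hx).elim
      (fun c hc => hc.2.trans (hz hc.1)))

lemma ScottClosed.union {F1 F2 : Set α} (h1 : ScottClosed F1) (h2 : ScottClosed F2) :
    ScottClosed (F1 ∪ F2) := by
  refine ⟨h1.1.union h2.1, ?_⟩
  intro D hD hne hdir a ha
  rcases directedOn_cofinal_cases hdir hD with h | h
  · obtain ⟨hne', hdir', hlub'⟩ :=
      isLUB_of_cofinal (Set.inter_subset_left) h hne hdir ha
    exact Or.inl (h1.2 _ (Set.inter_subset_right) hne' hdir' a hlub')
  · obtain ⟨hne', hdir', hlub'⟩ :=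
      isLUB_of_cofinal (Set.inter_subset_left) h hne hdir ha
    exact Or.inr (h2.2 _ (Set.inter_subset_right) hne' hdir' a hlub')

lemma isLUB_pcl_image {Y : Set α} {y : α} (hne : Y.Nonempty)
    (hdir : DirectedOn (· ≤ ·) Y) (hy : IsLUB Y y) :
    IsLUB (pcl '' Y) (pcl y) := by
  constructor
  · rintro _ ⟨d, hd, rfl⟩
    exact pcl_le_pcl.mpr (hy.1 hd)
  · intro z hz
    have hYz : Y ⊆ z.val := fun d hd => (hz ⟨d, hd, rfl⟩) (le_refl d)
    have hyz : y ∈ z.val := z.2.2 Y hYz hne hdir y hy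
    exact fun a ha => z.2.1 ha hyz

lemma ccompact_pcl (x : α) : CCompact (pcl x) := by
  intro S hSne hScl t hlub hle
  have hU : ScottClosed (⋃ B ∈ S, (B : Cσ α).val) := by
    constructor
    · intro a b hba ha
      obtain ⟨B, hB, haB⟩ := Set.mem_iUnion₂.mp ha
      exact Set.mem_iUnion₂.mpr ⟨B, hB, B.2.1 hba haB⟩
    · intro D hD hne hdir a ha
      have hsub : pcl '' D ⊆ S := by
        rintro _ ⟨d, hd, rfl⟩
        obtain ⟨B, hB, hdB⟩ := Set.mem_iUnion₂.mp (hD hd)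
        exact hScl.1 (show pcl d ≤ B from fun c hc => B.2.1 hc hdB) hB
      have hdir' : DirectedOn (· ≤ ·) (pcl '' D) := by
        rintro _ ⟨d1, h1, rfl⟩ _ ⟨d2, h2, rfl⟩
        obtain ⟨d3, h3, h13, h23⟩ := hdir d1 h1 d2 h2
        exact ⟨pcl d3, ⟨d3, h3, rfl⟩, pcl_le_pcl.mpr h13, pcl_le_pcl.mpr h23⟩
      have hmem : pcl a ∈ S :=
        hScl.2 _ hsub (hne.image _) hdir' (pcl a) (isLUB_pcl_image hne hdir ha)
      exact Set.mem_iUnion₂.mpr ⟨pcl a, hmem, le_refl a⟩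
  have htU : t ≤ ⟨_, hU⟩ := hlub.2 (fun B hB => Cσ.le_def.mpr (Set.subset_biUnion_of_mem hB))
  have hxU : x ∈ ⋃ B ∈ S, (B : Cσ α).val := htU (hle (le_refl x))
  obtain ⟨B, hB, hxB⟩ := Set.mem_iUnion₂.mp hxU
  exact hScl.1 (show pcl x ≤ B from fun c hc => B.2.1 hc hxB) hB

end Basic

section Iso
variable {L L' : Type*} [Preorder L] [Preorder L']

lemma ScottClosed.image (e : L ≃o L') {S : Set L} (hS : ScottClosed S) :
    ScottClosed (e '' S) := by
  constructor
  · intro a b hba ha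
    obtain ⟨c, hc, rfl⟩ := ha
    have : e.symm b ≤ c := by
      have := e.symm.monotone hba
      simpa using this
    exact ⟨e.symm b, hS.1 this hc, e.apply_symm_apply b⟩
  · intro D hD hne hdir a ha
    have hsub : e.symm '' D ⊆ S := by
      rintro _ ⟨d, hd, rfl⟩
      obtain ⟨c, hc, rfl⟩ := hD hd
      simpa using hc
    have hdir' : DirectedOn (· ≤ ·) (e.symm '' D) := by
      rintro _ ⟨d1, h1, rfl⟩ _ ⟨d2, h2, rfl⟩
      obtain ⟨d3, h3, h13, h23⟩ := hdir d1 h1 d2 h2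
      exact ⟨e.symm d3, ⟨d3, h3, rfl⟩, e.symm.monotone h13, e.symm.monotone h23⟩
    have hlub : IsLUB (e.symm '' D) (e.symm a) := e.symm.isLUB_image'.mpr (by simpa using ha)
    have : e.symm a ∈ S := hS.2 _ hsub (hne.image _) hdir' _ hlub
    exact ⟨e.symm a, this, e.apply_symm_apply a⟩

lemma CCompact.map (e : L ≃o L') {a : L} (h : CCompact a) : CCompact (e a) := by
  intro S' hne hcl t' hlub hle
  have hS : ScottClosed (e.symm '' S') := hcl.image e.symm
  have hlub' : IsLUB (e.symm '' S') (e.symm t') := e.symm.isLUB_image'.mpr (by simpa using hlub)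
  have hmem : a ∈ e.symm '' S' :=
    h _ (hne.image _) hS (e.symm t') hlub' (e.le_symm_apply.mpr hle)
  obtain ⟨s, hs, hEq⟩ := hmem
  have : e a = s := by rw [← hEq, e.apply_symm_apply]
  exact this ▸ hs

end Iso

section Irred
variable {α : Type*} [PartialOrder α]

lemma CCompact.scottIrred {A : Cσ α} (h : CCompact A) (hne : A.val.Nonempty) :
    ScottIrred A.val := by
  refine ⟨hne, fun F1 F2 h1 h2 hsub => ?_⟩
  set S : Set (Cσ α) := {B | B.val ⊆ F1} ∪ {B | B.val ⊆ F2} with hSdef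
  have hScl : ScottClosed S := by
    constructor
    · intro B C hle hB
      rcases hB with hB | hB
      · exact Or.inl (Set.Subset.trans hle hB)
      · exact Or.inr (Set.Subset.trans hle hB)
    · intro D hD hne' hdir t ht
      rcases directedOn_cofinal_cases hdir hD with hc | hc
      · have hub : (⟨F1, h1⟩ : Cσ α) ∈ upperBounds D := by
          intro B hB
          obtain ⟨C, ⟨_, hC⟩, hBC⟩ := hc B hB
          exact Cσ.le_def.mpr (Set.Subset.trans hBC hC)
        exact Or.inl (show t.val ⊆ F1 from Cσ.le_def.mp (ht.2 hub))
      · have hub : (⟨F2, h2⟩ : Cσ α) ∈ upperBounds D := by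
          intro B hB
          obtain ⟨C, ⟨_, hC⟩, hBC⟩ := hc B hB
          exact Cσ.le_def.mpr (Set.Subset.trans hBC hC)
        exact Or.inr (show t.val ⊆ F2 from Cσ.le_def.mp (ht.2 hub))
  have hlub : IsLUB S (⟨F1 ∪ F2, h1.union h2⟩ : Cσ α) := by
    constructor
    · rintro B (hB | hB)
      · exact Cσ.le_def.mpr (Set.Subset.trans hB Set.subset_union_left)
      · exact Cσ.le_def.mpr (Set.Subset.trans hB Set.subset_union_right)
    · intro z hz
      have hz1 : F1 ⊆ z.val := hz (Or.inl (Set.Subset.refl F1) : (⟨F1, h1⟩ : Cσ α) ∈ S)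
      have hz2 : F2 ⊆ z.val := hz (Or.inr (Set.Subset.refl F2) : (⟨F2, h2⟩ : Cσ α) ∈ S)
      exact Cσ.le_def.mpr (Set.union_subset hz1 hz2)
  have hSne : S.Nonempty := ⟨⟨∅, scottClosed_empty⟩, Or.inl (Set.empty_subset _)⟩
  exact h S hSne hScl _ hlub (Cσ.le_def.mpr hsub)

lemma orderIso_cσ_bot {P Q : Type*} [PartialOrder P] [PartialOrder Q] (e : Cσ P ≃o Cσ Q) :
    e ⟨∅, scottClosed_empty⟩ = ⟨∅, scottClosed_empty⟩ := by
  apply le_antisymm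
  · have h0 : (⟨∅, scottClosed_empty⟩ : Cσ P) ≤ e.symm ⟨∅, scottClosed_empty⟩ :=
      Cσ.le_def.mpr (Set.empty_subset _)
    have := e.monotone h0
    rwa [e.apply_symm_apply] at this
  · exact Cσ.le_def.mpr (Set.empty_subset _)

lemma orderIso_cσ_top {P Q : Type*} [PartialOrder P] [PartialOrder Q] (e : Cσ P ≃o Cσ Q) :
    e ⟨univ, scottClosed_univ⟩ = ⟨univ, scottClosed_univ⟩ := by
  apply le_antisymm
  · exact Cσ.le_def.mpr (Set.subset_univ _)
  · have h0 : e.symm ⟨univ, scottClosed_univ⟩ ≤ ⟨univ, scottClosed_univ⟩ :=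
      Cσ.le_def.mpr (Set.subset_univ _)
    have := e.monotone h0
    rwa [e.apply_symm_apply] at this

lemma isLUB_range_pcl : IsLUB (Set.range (pcl : α → Cσ α)) ⟨univ, scottClosed_univ⟩ := by
  constructor
  · rintro _ ⟨b, rfl⟩
    exact Cσ.le_def.mpr (Set.subset_univ _)
  · intro z hz
    refine Cσ.le_def.mpr (fun q _ => ?_)
    exact (hz ⟨q, rfl⟩) (le_refl q)

end Irred

/-- If `P` is a sober dcpo and `Q` is a bounded sober dcpo with `C_σ(P)` order
isomorphic to `C_σ(Q)`, then `P` is order isomorphic to `Q`. -/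
theorem sober_bounded_sober_faithful {P Q : Type*} [PartialOrder P] [PartialOrder Q]
    (hP : DirectedComplete P) (hQ : DirectedComplete Q)
    (sobP : ∀ F : Set P, ScottClosed F → ScottIrred F → ∃ x : P, F = Set.Iic x)
    (bsobQ : ∀ F : Set Q, ScottClosed F → ScottIrred F →
      (∃ b : Q, ∀ y ∈ F, y ≤ b) → ∃ x : Q, F = Set.Iic x)
    (iso : Cσ P ≃o Cσ Q) : Nonempty (P ≃o Q) := by
  classical
  -- images of point closures are nonempty
  have hne_fwd : ∀ x : P, (iso (pcl x)).val.Nonempty := by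
    intro x
    rcases Set.eq_empty_or_nonempty (iso (pcl x)).val with h | h
    · exfalso
      have h1 : iso (pcl x) = ⟨∅, scottClosed_empty⟩ := Subtype.ext h
      have h2 : iso (pcl x) = iso ⟨∅, scottClosed_empty⟩ := by
        rw [orderIso_cσ_bot iso]; exact h1
      have h3 : pcl x = ⟨∅, scottClosed_empty⟩ := iso.injective h2
      have : x ∈ (pcl x).val := le_refl x
      rw [h3] at this
      exact this
    · exact h
  have hne_bwd : ∀ b : Q, (iso.symm (pcl b)).val.Nonempty := by
    intro b
    rcases Set.eq_empty_or_nonempty (iso.symm (pcl b)).val with h | h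
    · exfalso
      have h1 : iso.symm (pcl b) = ⟨∅, scottClosed_empty⟩ := Subtype.ext h
      have h2 : iso.symm (pcl b) = iso.symm ⟨∅, scottClosed_empty⟩ := by
        rw [orderIso_cσ_bot iso.symm]; exact h1
      have h3 : pcl b = ⟨∅, scottClosed_empty⟩ := iso.symm.injective h2
      have : b ∈ (pcl b).val := le_refl b
      rw [h3] at this
      exact this
    · exact h
  -- the map g : Q → P
  have hg : ∀ b : Q, ∃ x : P, iso.symm (pcl b) = pcl x := by
    intro b
    have hcc : CCompact (iso.symm (pcl b)) := (ccompact_pcl b).map iso.symm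
    have hirr : ScottIrred (iso.symm (pcl b)).val := hcc.scottIrred (hne_bwd b)
    obtain ⟨x, hx⟩ := sobP _ (iso.symm (pcl b)).2 hirr
    exact ⟨x, Subtype.ext hx⟩
  choose g hgspec using hg
  -- bounded images give point closures in Q
  have hbnd : ∀ x : P, (∃ b : Q, (iso (pcl x)).val ⊆ Set.Iic b) →
      ∃ y : Q, iso (pcl x) = pcl y := by
    intro x hb
    have hcc : CCompact (iso (pcl x)) := (ccompact_pcl x).map (iso : Cσ P ≃o Cσ Q)
    have hirr : ScottIrred (iso (pcl x)).val := hcc.scottIrred (hne_fwd x)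
    obtain ⟨b, hbb⟩ := hb
    obtain ⟨y, hy⟩ := bsobQ _ (iso (pcl x)).2 hirr ⟨b, fun z hz => hbb hz⟩
    exact ⟨y, Subtype.ext hy⟩
  -- the set of bounded points is Scott closed
  set R : Set P := {x : P | ∃ b : Q, (iso (pcl x)).val ⊆ Set.Iic b} with hRdef
  have hRcl : ScottClosed R := by
    constructor
    · intro x x' hle hx
      obtain ⟨b, hb⟩ := hx
      exact ⟨b, Set.Subset.trans (Cσ.le_def.mp (iso.monotone (pcl_le_pcl.mpr hle))) hb⟩
    · intro D hD hne hdir a ha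
      set Y : Set Q := {y : Q | ∃ d ∈ D, iso (pcl d) = pcl y} with hYdef
      have hpt : ∀ d ∈ D, ∃ y : Q, iso (pcl d) = pcl y := fun d hd => hbnd d (hD hd)
      have hYne : Y.Nonempty := by
        obtain ⟨d, hd⟩ := hne
        obtain ⟨y, hy⟩ := hpt d hd
        exact ⟨y, d, hd, hy⟩
      have hYdir : DirectedOn (· ≤ ·) Y := by
        rintro y1 ⟨d1, hd1, h1⟩ y2 ⟨d2, hd2, h2⟩
        obtain ⟨d3, hd3, h13, h23⟩ := hdir d1 hd1 d2 hd2
        obtain ⟨y3, hy3⟩ := hpt d3 hd3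
        refine ⟨y3, ⟨d3, hd3, hy3⟩, ?_, ?_⟩
        · exact pcl_le_pcl.mp (by rw [← h1, ← hy3]; exact iso.monotone (pcl_le_pcl.mpr h13))
        · exact pcl_le_pcl.mp (by rw [← h2, ← hy3]; exact iso.monotone (pcl_le_pcl.mpr h23))
      obtain ⟨ystar, hystar⟩ := hQ Y hYne hYdir
      have him : (⇑iso) '' (pcl '' D) = pcl '' Y := by
        apply Set.Subset.antisymm
        · rintro _ ⟨_, ⟨d, hd, rfl⟩, rfl⟩
          obtain ⟨y, hy⟩ := hpt d hd
          exact ⟨y, ⟨d, hd, hy⟩, hy.symm⟩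
        · rintro _ ⟨y, ⟨d, hd, hy⟩, rfl⟩
          exact ⟨pcl d, ⟨d, hd, rfl⟩, hy⟩
      have hlub1 : IsLUB ((⇑iso) '' (pcl '' D)) (iso (pcl a)) :=
        iso.isLUB_image'.mpr (isLUB_pcl_image hne hdir ha)
      have hlub2 : IsLUB (pcl '' Y) (pcl ystar) := isLUB_pcl_image hYne hYdir hystar
      rw [him] at hlub1
      have : iso (pcl a) = pcl ystar := hlub1.unique hlub2
      exact ⟨ystar, by rw [this]; exact Set.Subset.rfl⟩
  -- R is all of P
  have hRuniv : ∀ x : P, x ∈ R := by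
    have hlubQ : IsLUB (Set.range (pcl : Q → Cσ Q)) ⟨univ, scottClosed_univ⟩ :=
      isLUB_range_pcl
    have hlubP : IsLUB ((⇑iso.symm) '' Set.range (pcl : Q → Cσ Q))
        (⟨univ, scottClosed_univ⟩ : Cσ P) := by
      have := iso.symm.isLUB_image'.mpr hlubQ
      rwa [orderIso_cσ_top iso.symm] at this
    have hub : (⟨R, hRcl⟩ : Cσ P) ∈ upperBounds ((⇑iso.symm) '' Set.range (pcl : Q → Cσ Q)) := by
      rintro _ ⟨_, ⟨b, rfl⟩, rfl⟩
      rw [hgspec b]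
      refine Cσ.le_def.mpr (fun z hz => ?_)
      have hgbR : g b ∈ R := by
        refine ⟨b, ?_⟩
        have : iso (pcl (g b)) = pcl b := by rw [← hgspec b, iso.apply_symm_apply]
        rw [this]
        exact Set.Subset.rfl
      exact hRcl.1 hz hgbR
    have := hlubP.2 hub
    exact fun x => (Cσ.le_def.mp this) (Set.mem_univ x)
  -- the map f : P → Q
  have hf : ∀ x : P, ∃ y : Q, iso (pcl x) = pcl y := fun x => hbnd x (hRuniv x)
  choose f hfspec using hf
  -- f and g are mutually inverse
  have hgf : ∀ x : P, g (f x) = x := by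
    intro x
    apply pcl_injective
    rw [← hgspec (f x), ← hfspec x, iso.symm_apply_apply]
  have hfg : ∀ b : Q, f (g b) = b := by
    intro b
    apply pcl_injective
    rw [← hfspec (g b), ← hgspec b, iso.apply_symm_apply]
  refine ⟨{ toFun := f, invFun := g, left_inv := hgf, right_inv := hfg,
            map_rel_iff' := ?_ }⟩
  intro a b
  constructor
  · intro h
    have : iso (pcl a) ≤ iso (pcl b) := by
      rw [hfspec a, hfspec b]; exact pcl_le_pcl.mpr h
    exact pcl_le_pcl.mp (iso.le_iff_le.mp this)
  · intro h
    have : pcl (f a) ≤ pcl (f b) := by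
      rw [← hfspec a, ← hfspec b]; exact iso.monotone (pcl_le_pcl.mpr h)
    exact pcl_le_pcl.mp this
end
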